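/- arXiv:1310.1159 — 3 statements merged into one kernel-verified Lean document; each statement's English description precedes it below -/
import Mathlib

section
/- Let R be a ring. Consider a commutative square of chain complexes of R-modules with maps g : W → E, f : X → B, i : W → X, p : E → B satisfying p ∘ g = f ∘ i, where i is a degreewise split monomorphism and p is a degreewise split epimorphism. If i or p is a homotopy equivalence, then there exists a chain map λ : X → E with λ ∘ i = g and p ∘ λ = f. -/
open CategoryTheory

variable (R : Type) [Ring R]

/-- Concrete chain homotopy from `u` to `v`: `d ∘ sₙ + sₙ₋₁ ∘ d = uₙ - vₙ`. -/
def IsHomotopy {X Y : ChainComplex (ModuleCat R) ℤ} (u v : X ⟶ Y)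
    (s : ∀ n : ℤ, X.X n ⟶ Y.X (n + 1)) : Prop :=
  ∀ n : ℤ, s n ≫ Y.d (n + 1) n +
      X.d n (n - 1) ≫ s (n - 1) ≫ eqToHom (congrArg Y.X (show n - 1 + 1 = n by omega)) =
    u.f n - v.f n

/-- Two chain maps are chain homotopic. -/
def Homotopic {X Y : ChainComplex (ModuleCat R) ℤ} (u v : X ⟶ Y) : Prop :=
  ∃ s, IsHomotopy R u v s

/-- A chain map is a homotopy equivalence: it admits an inverse up to chain homotopy. -/
def IsHtpyEquiv {X Y : ChainComplex (ModuleCat R) ℤ} (f : X ⟶ Y) : Prop :=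
  ∃ g : Y ⟶ X, Homotopic R (f ≫ g) (𝟙 X) ∧ Homotopic R (g ≫ f) (𝟙 Y)

/-- Degreewise split monomorphism: each `iₙ` admits an `R`-linear retraction. -/
def DegSplitMono {W Y : ChainComplex (ModuleCat R) ℤ} (i : W ⟶ Y) : Prop :=
  ∀ n : ℤ, ∃ r : Y.X n →ₗ[R] W.X n, ∀ w : W.X n, r (i.f n w) = w

/-- Degreewise split epimorphism: each `pₙ` admits an `R`-linear section. -/
def DegSplitEpi {E B : ChainComplex (ModuleCat R) ℤ} (p : E ⟶ B) : Prop :=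
  ∀ n : ℤ, ∃ s : B.X n →ₗ[R] E.X n, ∀ b : B.X n, p.f n (s b) = b

/-!
An idempotent chain map `q` that is null-homotopic via a family `h` is also null-homotopic via
`q ≫ h ≫ q`, and this homotopy is killed by every map that `q` kills.

If `i` is a homotopy equivalence with a degreewise retraction `ρ` and `u : i ≫ j ∼ 𝟙`, correcting
`j` by the null-homotopic map of `ρ ≫ u` gives a chain retraction `r` of `i`, and
`q := 𝟙 - r ≫ i` is an idempotent null-homotopic map with `i ≫ q = 0`. With `σ` a degreewise
section of `p`, the lift is `r ≫ g` plus the null-homotopic map of `q ≫ h ≫ q ≫ f ≫ σ`: the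
correction vanishes on `i` and contributes `q ≫ f` after `p`. The case of `p` is dual.
-/

namespace Homotopy

variable {ι V : Type*} [Category V] [Preadditive V] {c : ComplexShape ι}
  {C D : HomologicalComplex V c}

lemma nullHomotopicMap_sub (h k : ∀ i j, C.X i ⟶ D.X j) :
    nullHomotopicMap (fun i j => h i j - k i j) = nullHomotopicMap h - nullHomotopicMap k := by
  ext n
  simp only [nullHomotopicMap, HomologicalComplex.sub_f_apply]
  rw [show (fun i j => h i j - k i j) = h - k from rfl, map_sub, map_sub]
  abel

lemma nullHomotopicMap_zero : nullHomotopicMap (fun i j => (0 : C.X i ⟶ D.X j)) = 0 := by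
  simpa using nullHomotopicMap_sub (0 : ∀ i j, C.X i ⟶ D.X j) 0

lemma nullHomotopicMap_hom {f g : C ⟶ D} (H : Homotopy f g) :
    nullHomotopicMap H.hom = f - g := by
  ext n
  simp [H.comm n, nullHomotopicMap]

lemma nullHomotopicMap_eq_conj_of_idem {q : C ⟶ C} (hq : q ≫ q = q)
    {h : ∀ i j, C.X i ⟶ C.X j} (hqh : q = nullHomotopicMap h) :
    q = nullHomotopicMap (fun i j => q.f i ≫ h i j ≫ q.f j) := by
  calc q = q ≫ nullHomotopicMap h ≫ q := by rw [← hqh, hq, hq]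
    _ = _ := by simp only [comp_nullHomotopicMap, nullHomotopicMap_comp]

end Homotopy

namespace HomotopyEquiv

open Homotopy

variable {ι V : Type*} [Category V] [Preadditive V] {c : ComplexShape ι}
  {W X : HomologicalComplex V c}

lemma exists_retraction_of_degreewise_retraction (e : HomotopyEquiv W X)
    (ρ : ∀ n, X.X n ⟶ W.X n) (hρ : ∀ n, e.hom.f n ≫ ρ n = 𝟙 _) :
    ∃ (r : X ⟶ W) (h : ∀ i j, X.X i ⟶ X.X j),
      e.hom ≫ r = 𝟙 W ∧ 𝟙 X - r ≫ e.hom = nullHomotopicMap h := by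
  set u := e.homotopyHomInvId
  set v := e.homotopyInvHomId
  refine ⟨e.inv - nullHomotopicMap (fun i j => ρ i ≫ u.hom i j),
    fun i j => (ρ i ≫ u.hom i j) ≫ e.hom.f j - v.hom i j, ?_, ?_⟩
  · rw [Preadditive.comp_sub, comp_nullHomotopicMap]
    simp only [reassoc_of% hρ]
    rw [u.nullHomotopicMap_hom]
    abel
  · rw [nullHomotopicMap_sub, ← nullHomotopicMap_comp, Preadditive.sub_comp,
      v.nullHomotopicMap_hom]
    abel

lemma exists_section_of_degreewise_section (e : HomotopyEquiv W X)
    (σ : ∀ n, X.X n ⟶ W.X n) (hσ : ∀ n, σ n ≫ e.hom.f n = 𝟙 _) :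
    ∃ (t : X ⟶ W) (h : ∀ i j, W.X i ⟶ W.X j),
      t ≫ e.hom = 𝟙 X ∧ 𝟙 W - e.hom ≫ t = nullHomotopicMap h := by
  set u := e.homotopyHomInvId
  set v := e.homotopyInvHomId
  refine ⟨e.inv - nullHomotopicMap (fun i j => v.hom i j ≫ σ j),
    fun i j => e.hom.f i ≫ v.hom i j ≫ σ j - u.hom i j, ?_, ?_⟩
  · rw [Preadditive.sub_comp, nullHomotopicMap_comp]
    simp only [Category.assoc, hσ, Category.comp_id]
    rw [v.nullHomotopicMap_hom]
    abel
  · rw [nullHomotopicMap_sub, ← comp_nullHomotopicMap, Preadditive.comp_sub,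
      u.nullHomotopicMap_hom]
    abel

end HomotopyEquiv

namespace HomologicalComplex

open Homotopy

variable {ι V : Type*} [Category V] [Preadditive V] {c : ComplexShape ι}
  {W X E B : HomologicalComplex V c} {i : W ⟶ X} {p : E ⟶ B} {g : W ⟶ E} {f : X ⟶ B}

lemma exists_lift_of_retraction (hsq : g ≫ p = i ≫ f)
    (σ : ∀ n, B.X n ⟶ E.X n) (hσ : ∀ n, σ n ≫ p.f n = 𝟙 _)
    {r : X ⟶ W} {h : ∀ a b, X.X a ⟶ X.X b} (hr : i ≫ r = 𝟙 W)
    (hq : 𝟙 X - r ≫ i = nullHomotopicMap h) :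
    ∃ l : X ⟶ E, i ≫ l = g ∧ l ≫ p = f := by
  set q := 𝟙 X - r ≫ i
  have hqq : q ≫ q = q := by simp [q, reassoc_of% hr]
  have hiq : ∀ n, i.f n ≫ q.f n = 0 := fun n => by
    rw [← comp_f, show i ≫ q = 0 by simp [q, reassoc_of% hr], zero_f]
  refine ⟨r ≫ g + nullHomotopicMap (fun a b => q.f a ≫ h a b ≫ q.f b ≫ f.f b ≫ σ b), ?_, ?_⟩
  · simp only [Preadditive.comp_add, reassoc_of% hr, comp_nullHomotopicMap, reassoc_of% hiq,
      Limits.zero_comp, nullHomotopicMap_zero, add_zero]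
  · have hqf : q ≫ f = nullHomotopicMap (fun a b => q.f a ≫ h a b ≫ q.f b ≫ f.f b) := by
      conv_lhs => rw [nullHomotopicMap_eq_conj_of_idem hqq hq]
      simp only [nullHomotopicMap_comp, Category.assoc]
    simp only [Preadditive.add_comp, Category.assoc, hsq, nullHomotopicMap_comp, hσ,
      Category.comp_id, ← hqf, q, Preadditive.sub_comp, Category.id_comp]
    abel

lemma exists_lift_of_section (hsq : g ≫ p = i ≫ f)
    (ρ : ∀ n, X.X n ⟶ W.X n) (hρ : ∀ n, i.f n ≫ ρ n = 𝟙 _)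
    {t : B ⟶ E} {h : ∀ a b, E.X a ⟶ E.X b} (ht : t ≫ p = 𝟙 B)
    (hq : 𝟙 E - p ≫ t = nullHomotopicMap h) :
    ∃ l : X ⟶ E, i ≫ l = g ∧ l ≫ p = f := by
  set q := 𝟙 E - p ≫ t
  have hqq : q ≫ q = q := by simp [q, reassoc_of% ht]
  have hqp : ∀ n, q.f n ≫ p.f n = 0 := fun n => by
    rw [← comp_f, show q ≫ p = 0 by simp [q, ht], zero_f]
  refine ⟨f ≫ t + nullHomotopicMap (fun a b => ρ a ≫ g.f a ≫ q.f a ≫ h a b ≫ q.f b), ?_, ?_⟩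
  · have hgq : g ≫ q = nullHomotopicMap (fun a b => g.f a ≫ q.f a ≫ h a b ≫ q.f b) := by
      conv_lhs => rw [nullHomotopicMap_eq_conj_of_idem hqq hq]
      rw [comp_nullHomotopicMap]
    simp only [Preadditive.comp_add, ← Category.assoc, ← hsq, comp_nullHomotopicMap,
      reassoc_of% hρ]
    simp only [Category.assoc, ← hgq, q, Preadditive.comp_sub, Category.comp_id]
    abel
  · simp only [Preadditive.add_comp, Category.assoc, ht, nullHomotopicMap_comp, hqp,
      Limits.comp_zero, nullHomotopicMap_zero, Category.comp_id, add_zero]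

end HomologicalComplex

section ModuleCat

variable {R}

lemma Homotopic.nonempty_homotopy {X Y : ChainComplex (ModuleCat R) ℤ} {u v : X ⟶ Y}
    (huv : Homotopic R u v) : Nonempty (Homotopy u v) := by
  obtain ⟨s, hs⟩ := huv
  refine ⟨{ hom := fun a b => if h : a + 1 = b then s a ≫ eqToHom (congrArg Y.X h) else 0,
            zero := fun a b hab => dif_neg hab,
            comm := fun n => ?_ }⟩
  rw [dNext_eq _ (show (ComplexShape.down ℤ).Rel n (n - 1) by simp),
    prevD_eq _ (show (ComplexShape.down ℤ).Rel (n + 1) n by simp), dif_pos (by omega),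
    dif_pos rfl, eqToHom_refl, Category.comp_id, ← sub_eq_iff_eq_add, ← hs n]
  abel

lemma IsHtpyEquiv.exists_homotopyEquiv {X Y : ChainComplex (ModuleCat R) ℤ} {f : X ⟶ Y}
    (hf : IsHtpyEquiv R f) : ∃ e : HomotopyEquiv X Y, e.hom = f := by
  obtain ⟨g, hfg, hgf⟩ := hf
  exact ⟨⟨f, g, hfg.nonempty_homotopy.some, hgf.nonempty_homotopy.some⟩, rfl⟩

lemma DegSplitMono.exists_retraction {W X : ChainComplex (ModuleCat R) ℤ} {i : W ⟶ X}
    (hi : DegSplitMono R i) : ∃ ρ : ∀ n, X.X n ⟶ W.X n, ∀ n, i.f n ≫ ρ n = 𝟙 _ := by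
  choose ρ hρ using hi
  exact ⟨fun n => ModuleCat.ofHom (ρ n), fun n => by ext w; exact hρ n w⟩

lemma DegSplitEpi.exists_section {E B : ChainComplex (ModuleCat R) ℤ} {p : E ⟶ B}
    (hp : DegSplitEpi R p) : ∃ σ : ∀ n, B.X n ⟶ E.X n, ∀ n, σ n ≫ p.f n = 𝟙 _ := by
  choose σ hσ using hp
  exact ⟨fun n => ModuleCat.ofHom (σ n), fun n => by ext b; exact hσ n b⟩

end ModuleCat

/-- Lifting in a square with a degreewise split mono on the left, a degreewise split epi on the
right, one of which is a homotopy equivalence. -/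
theorem statement4 (R : Type) [Ring R] {W X E B : ChainComplex (ModuleCat R) ℤ}
    (i : W ⟶ X) (p : E ⟶ B) (g : W ⟶ E) (f : X ⟶ B)
    (hsq : g ≫ p = i ≫ f)
    (hi : DegSplitMono R i) (hp : DegSplitEpi R p)
    (h : IsHtpyEquiv R i ∨ IsHtpyEquiv R p) :
    ∃ l : X ⟶ E, i ≫ l = g ∧ l ≫ p = f := by
  obtain ⟨ρ, hρ⟩ := hi.exists_retraction
  obtain ⟨σ, hσ⟩ := hp.exists_section
  rcases h with hi' | hp'
  · obtain ⟨e, rfl⟩ := hi'.exists_homotopyEquiv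
    obtain ⟨r, k, hr, hk⟩ := e.exists_retraction_of_degreewise_retraction ρ hρ
    exact HomologicalComplex.exists_lift_of_retraction hsq σ hσ hr hk
  · obtain ⟨e, rfl⟩ := hp'.exists_homotopyEquiv
    obtain ⟨t, k, ht, hk⟩ := e.exists_section_of_degreewise_section σ hσ
    exact HomologicalComplex.exists_lift_of_section hsq ρ hρ ht hk
end

section
/- Let R be a ring. A chain map p : E → B of chain complexes of R-modules satisfies the covering homotopy property — meaning: for every chain complex W, chain maps g : W → E and f : W → B, and chain homotopy s from p ∘ g to f, there exist a chain map g' : W → E with p ∘ g' = f and a chain homotopy s̃ from g to g' such that p ∘ s̃_n = s_n for all n — if and only if p is a degreewise split epimorphism. -/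
open CategoryTheory

variable (R : Type) [Ring R]

/-!
If `p` has degreewise sections `σ`, a homotopy `s` from `p ∘ g` to `f` lifts to `t = σ ∘ s`,
and `g' = g - (d t + t d)` is a chain map homotopic to `g` via `t` with
`p ∘ g' = p ∘ g - (d s + s d) = f`.
Conversely, take for `W` the complex `B` shifted down by one, `Wₘ = Bₘ₊₁`, with `g = 0`,
`s = id` and `f = -(d s + s d)`; a lift `t` of this `s` through `p` is a family of sections
`Bₘ₊₁ → Eₘ₊₁`.
-/

section Preadditive

variable {V : Type*} [Category V] [Preadditive V]

lemma eqToHom_comp_hom_f {X Y : ChainComplex V ℤ} (u : X ⟶ Y) {a b : ℤ} (h : a = b) :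
    eqToHom (congrArg X.X h) ≫ u.f b = u.f a ≫ eqToHom (congrArg Y.X h) := by
  subst h; simp

def nullHomotopic {X Y : ChainComplex V ℤ} (t : ∀ n : ℤ, X.X n ⟶ Y.X (n + 1)) : X ⟶ Y where
  f n := t n ≫ Y.d (n + 1) n +
    X.d n (n - 1) ≫ t (n - 1) ≫ eqToHom (congrArg Y.X (show n - 1 + 1 = n by omega))
  comm' i j hij := by
    obtain rfl : i = j + 1 := hij.symm
    simp [Preadditive.comp_add, Preadditive.add_comp]

lemma nullHomotopic_comp {X Y Z : ChainComplex V ℤ} (t : ∀ n : ℤ, X.X n ⟶ Y.X (n + 1))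
    (q : Y ⟶ Z) : nullHomotopic t ≫ q = nullHomotopic fun n => t n ≫ q.f (n + 1) := by
  ext n
  simp only [nullHomotopic, HomologicalComplex.comp_f, Preadditive.add_comp, Category.assoc,
    ← q.comm, eqToHom_comp_hom_f q (show n - 1 + 1 = n by omega)]

def shiftDown (B : ChainComplex V ℤ) : ChainComplex V ℤ where
  X m := B.X (m + 1)
  d i j := B.d (i + 1) (j + 1)
  shape i j h := B.shape _ _ (by simp only [ComplexShape.down_Rel] at h ⊢; omega)
  d_comp_d' _ _ _ _ _ := B.d_comp_d _ _ _

end Preadditive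

lemma isHomotopy_iff {X Y : ChainComplex (ModuleCat R) ℤ} (u v : X ⟶ Y)
    (s : ∀ n : ℤ, X.X n ⟶ Y.X (n + 1)) : IsHomotopy R u v s ↔ nullHomotopic s = u - v := by
  rw [HomologicalComplex.hom_ext_iff]
  rfl

lemma degSplitEpi_of_succ {E B : ChainComplex (ModuleCat R) ℤ} (p : E ⟶ B)
    (h : ∀ m : ℤ, ∃ σ : B.X (m + 1) ⟶ E.X (m + 1), σ ≫ p.f (m + 1) = 𝟙 _) :
    DegSplitEpi R p := by
  intro n
  obtain ⟨m, rfl⟩ : ∃ m, n = m + 1 := ⟨n - 1, by omega⟩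
  obtain ⟨σ, hσ⟩ := h m
  exact ⟨σ.hom, fun b => congrArg (fun φ => φ.hom b) hσ⟩

/-- A chain map satisfies the covering homotopy property iff it is a degreewise split
epimorphism. -/
theorem statement5 (R : Type) [Ring R] {E B : ChainComplex (ModuleCat R) ℤ} (p : E ⟶ B) :
    (∀ (W : ChainComplex (ModuleCat R) ℤ) (g : W ⟶ E) (f : W ⟶ B)
      (s : ∀ n : ℤ, W.X n ⟶ B.X (n + 1)), IsHomotopy R (g ≫ p) f s →
      ∃ (g' : W ⟶ E) (t : ∀ n : ℤ, W.X n ⟶ E.X (n + 1)),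
        g' ≫ p = f ∧ IsHomotopy R g g' t ∧ ∀ n : ℤ, t n ≫ p.f (n + 1) = s n) ↔
    DegSplitEpi R p := by
  constructor
  · intro hchp
    apply degSplitEpi_of_succ
    let s : ∀ m : ℤ, (shiftDown B).X m ⟶ B.X (m + 1) := fun m => 𝟙 _
    have hs : IsHomotopy R (0 ≫ p) (-nullHomotopic s) s := by
      rw [isHomotopy_iff, Limits.zero_comp, zero_sub, neg_neg]
    obtain ⟨-, t, -, -, ht⟩ := hchp (shiftDown B) 0 _ s hs
    exact fun m => ⟨t m, ht m⟩
  · intro hsplit W g f s hs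
    choose σ hσ using hsplit
    let t : ∀ m : ℤ, W.X m ⟶ E.X (m + 1) := fun m => s m ≫ ModuleCat.ofHom (σ (m + 1))
    have ht : ∀ m, t m ≫ p.f (m + 1) = s m := fun m => by
      ext b
      exact hσ (m + 1) (s m b)
    refine ⟨g - nullHomotopic t, t, ?_, ?_, ht⟩
    · rw [Preadditive.sub_comp, nullHomotopic_comp, funext ht, (isHomotopy_iff R _ _ _).1 hs,
        sub_sub_cancel]
    · rw [isHomotopy_iff, sub_sub_cancel]
end

section
/- Let R be a ring. A chain map i : W → X of chain complexes of R-modules satisfies the homotopy extension property — meaning: for every chain complex B, chain maps f : X → B and g : W → B, and chain homotopy s from f ∘ i to g, there exist a chain map f' : X → B with f' ∘ i = g and a chain homotopy s̃ from f to f' such that s̃_n ∘ i_n = s_n for all n — if and only if i is a degreewise split monomorphism. -/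
/-!
If every `iₙ` has a retraction `rₙ`, the homotopy `s` extends to `t := r ≫ s`, and
`f' := f - (d t + t d)` is a chain map homotopic to `f` through `t` which restricts to `g`
along `i`. Conversely, the inclusion `W ⟶ cone(𝟙 W)` is null-homotopic, so extending that
null-homotopy along `i` yields a chain map `X ⟶ cone(𝟙 W)` restricting to the inclusion; its
`W`-component in each degree is a retraction of `i`.
-/

open CategoryTheory

variable (R : Type) [Ring R]

namespace ChainComplex

variable {R : Type} [Ring R]

def HasHomotopyExtension {W X : ChainComplex (ModuleCat R) ℤ} (i : W ⟶ X) : Prop :=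
  ∀ (B : ChainComplex (ModuleCat R) ℤ) (f : X ⟶ B) (g : W ⟶ B)
    (s : ∀ n : ℤ, W.X n ⟶ B.X (n + 1)), IsHomotopy R (i ≫ f) g s →
    ∃ (f' : X ⟶ B) (t : ∀ n : ℤ, X.X n ⟶ B.X (n + 1)),
      i ≫ f' = g ∧ IsHomotopy R f f' t ∧ ∀ n : ℤ, i.f n ≫ t n = s n

variable {X B : ChainComplex (ModuleCat R) ℤ}

def homotopyHom (t : ∀ n : ℤ, X.X n ⟶ B.X (n + 1)) :
    ∀ i j, (ComplexShape.down ℤ).Rel j i → (X.X i ⟶ B.X j) :=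
  fun i _ hij => t i ≫ eqToHom (congrArg B.X hij)

lemma nullHomotopicMap'_homotopyHom_f (t : ∀ n : ℤ, X.X n ⟶ B.X (n + 1)) (n : ℤ) :
    (Homotopy.nullHomotopicMap' (homotopyHom t)).f n =
      t n ≫ B.d (n + 1) n +
        X.d n (n - 1) ≫ t (n - 1) ≫ eqToHom (congrArg B.X (show n - 1 + 1 = n by omega)) := by
  rw [Homotopy.nullHomotopicMap'_f (k₂ := n + 1) (k₀ := n - 1) rfl (by simp), add_comm]
  simp [homotopyHom]

lemma isHomotopy_iff_sub_eq_nullHomotopicMap' (u v : X ⟶ B)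
    (t : ∀ n : ℤ, X.X n ⟶ B.X (n + 1)) :
    IsHomotopy R u v t ↔ u - v = Homotopy.nullHomotopicMap' (homotopyHom t) := by
  simp only [IsHomotopy, HomologicalComplex.hom_ext_iff, HomologicalComplex.sub_f_apply,
    nullHomotopicMap'_homotopyHom_f, eq_comm]

lemma _root_.Homotopy.isHomotopy {u v : X ⟶ B} (h : Homotopy u v) :
    IsHomotopy R u v fun n => h.hom n (n + 1) := by
  have hom_eqToHom : ∀ a b c (e : b = c),
      h.hom a b ≫ eqToHom (congrArg B.X e) = h.hom a c := by
    rintro a b _ rfl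
    simp
  intro n
  rw [h.comm n, dNext_eq h.hom (show (ComplexShape.down ℤ).Rel n (n - 1) by simp),
    prevD_eq h.hom (show (ComplexShape.down ℤ).Rel (n + 1) n by simp),
    hom_eqToHom _ _ _ (by omega)]
  abel

lemma comp_nullHomotopicMap'_homotopyHom {W : ChainComplex (ModuleCat R) ℤ} (φ : W ⟶ X)
    (t : ∀ n : ℤ, X.X n ⟶ B.X (n + 1)) :
    φ ≫ Homotopy.nullHomotopicMap' (homotopyHom t) =
      Homotopy.nullHomotopicMap' (homotopyHom fun n => φ.f n ≫ t n) := by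
  rw [Homotopy.comp_nullHomotopicMap']
  unfold homotopyHom
  simp only [Category.assoc]

variable {W : ChainComplex (ModuleCat R) ℤ} {i : W ⟶ X}

lemma hasHomotopyExtension_of_degSplitMono (hi : DegSplitMono R i) : HasHomotopyExtension i := by
  intro B f g s hs
  choose r hr using hi
  let t : ∀ n : ℤ, X.X n ⟶ B.X (n + 1) := fun n => ModuleCat.ofHom (r n) ≫ s n
  have hit : ∀ n, i.f n ≫ t n = s n := fun n => by
    ext w
    exact congrArg (s n) (hr n w)
  refine ⟨f - Homotopy.nullHomotopicMap' (homotopyHom t), t, ?_, ?_, hit⟩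
  · rw [Preadditive.comp_sub, comp_nullHomotopicMap'_homotopyHom, funext hit,
      ← (isHomotopy_iff_sub_eq_nullHomotopicMap' _ _ _).1 hs, sub_sub_cancel]
  · rw [isHomotopy_iff_sub_eq_nullHomotopicMap', sub_sub_cancel]

open HomologicalComplex in
lemma degSplitMono_of_hasHomotopyExtension (hi : HasHomotopyExtension i) : DegSplitMono R i := by
  have hc : ∀ j : ℤ, ∃ k, (ComplexShape.down ℤ).Rel k j := fun j => ⟨j + 1, rfl⟩
  have h := (homotopyCofiber.inrCompHomotopy (𝟙 W) hc).symm
  have hinr : IsHomotopy R (i ≫ 0) (homotopyCofiber.inr (𝟙 W)) fun n => h.hom n (n + 1) := by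
    simpa using h.isHomotopy
  obtain ⟨f', -, hf', -, -⟩ := hi _ _ _ _ hinr
  intro n
  have hretr : i.f n ≫ f'.f n ≫ homotopyCofiber.sndX (𝟙 W) n = 𝟙 _ := by
    rw [← Category.assoc, ← comp_f, hf', homotopyCofiber.inr_f, homotopyCofiber.inrX_sndX]
  exact ⟨(f'.f n ≫ homotopyCofiber.sndX (𝟙 W) n).hom, fun w => congrArg (·.hom w) hretr⟩

end ChainComplex

open ChainComplex in
/-- A chain map satisfies the homotopy extension property iff it is a degreewise split
monomorphism. -/
theorem statement6 (R : Type) [Ring R] {W X : ChainComplex (ModuleCat R) ℤ} (i : W ⟶ X) :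
    (∀ (B : ChainComplex (ModuleCat R) ℤ) (f : X ⟶ B) (g : W ⟶ B)
      (s : ∀ n : ℤ, W.X n ⟶ B.X (n + 1)), IsHomotopy R (i ≫ f) g s →
      ∃ (f' : X ⟶ B) (t : ∀ n : ℤ, X.X n ⟶ B.X (n + 1)),
        i ≫ f' = g ∧ IsHomotopy R f f' t ∧ ∀ n : ℤ, i.f n ≫ t n = s n) ↔
    DegSplitMono R i :=
  ⟨degSplitMono_of_hasHomotopyExtension, hasHomotopyExtension_of_degSplitMono⟩
end
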